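/- If a linear map Λ from M_n(ℂ) to M_m(ℂ) is N-positive for N = min(n, m), then Λ is completely positive. -/

import Mathlib

open scoped Kronecker ComplexOrder

/-- The Choi matrix of a linear map `Λ : M_n(ℂ) → M_m(ℂ)`:
`C(Λ) = ∑ i j, Λ(E i j) ⊗ₖ E i j`, a matrix indexed by `Fin m × Fin n`. -/
noncomputable def choi {n m : ℕ}
    (Λ : Matrix (Fin n) (Fin n) ℂ →ₗ[ℂ] Matrix (Fin m) (Fin m) ℂ) :
    Matrix (Fin m × Fin n) (Fin m × Fin n) ℂ :=
  ∑ i : Fin n, ∑ j : Fin n,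
    (Λ (Matrix.single i j 1)) ⊗ₖ (Matrix.single i j 1)

/-- `Λ ⊗ id_N` : the unique linear map with `(Λ ⊗ id_N)(A ⊗ₖ B) = Λ(A) ⊗ₖ B`,
written out explicitly. -/
noncomputable def tensorId {n m : ℕ}
    (Λ : Matrix (Fin n) (Fin n) ℂ →ₗ[ℂ] Matrix (Fin m) (Fin m) ℂ) (N : ℕ)
    (M : Matrix (Fin n × Fin N) (Fin n × Fin N) ℂ) :
    Matrix (Fin m × Fin N) (Fin m × Fin N) ℂ :=
  Matrix.of fun p q => Λ (Matrix.of fun i j => M (i, p.2) (j, q.2)) p.1 q.1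

/-- `Λ` is `N`-positive: `Λ ⊗ id_N` maps PSD matrices to PSD matrices. -/
def NPos {n m : ℕ}
    (Λ : Matrix (Fin n) (Fin n) ℂ →ₗ[ℂ] Matrix (Fin m) (Fin m) ℂ) (N : ℕ) : Prop :=
  ∀ M : Matrix (Fin n × Fin N) (Fin n × Fin N) ℂ,
    M.PosSemidef → (tensorId Λ N M).PosSemidef

/-- `Λ` is completely positive: `N`-positive for every `N ≥ 1`. -/
def CP {n m : ℕ}
    (Λ : Matrix (Fin n) (Fin n) ℂ →ₗ[ℂ] Matrix (Fin m) (Fin m) ℂ) : Prop :=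
  ∀ N : ℕ, 1 ≤ N → NPos Λ N

/-! The Choi matrix `C(Λ)` controls every `Λ ⊗ id_N`: the quadratic form of `(Λ ⊗ id_N)(x x*)` at
`w` is the quadratic form of `C(Λ)` at the partial contraction
`u (a, i) = ∑ t, w (a, t) * conj x (i, t)`.
Every PSD matrix is a sum of such `x x*`, so a PSD Choi matrix makes `Λ` `N`-positive for all `N`.
Conversely, with `N = min n m` every `u` is such a contraction (take `x` or `w` to be the identity),
so `min n m`-positivity already forces `C(Λ)` to be PSD. -/

open Matrix

theorem Matrix.posSemidef_of_forall_dotProduct_mulVec_nonneg {k : Type*} [Fintype k]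
    [DecidableEq k] {A : Matrix k k ℂ} (h : ∀ x, 0 ≤ star x ⬝ᵥ A *ᵥ x) : A.PosSemidef := by
  refine .of_dotProduct_mulVec_nonneg ?_ h
  rw [← isSymmetric_toEuclideanLin_iff, LinearMap.isSymmetric_iff_inner_map_self_real]
  intro v
  simp only [EuclideanSpace.inner_eq_star_dotProduct, ofLp_toLpLin, toLin'_apply]
  rw [dotProduct_comm, star_dotProduct]
  exact IsSelfAdjoint.star_iff.mpr (.of_nonneg (h v.ofLp))

section

variable {n m : ℕ} (Λ : Matrix (Fin n) (Fin n) ℂ →ₗ[ℂ] Matrix (Fin m) (Fin m) ℂ)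

theorem choi_apply (p q : Fin m) (i j : Fin n) :
    choi Λ (p, i) (q, j) = Λ (single i j 1) p q := by
  simp [choi, Matrix.sum_apply, single_apply, ite_and]

theorem apply_eq_sum_mul_choi (X : Matrix (Fin n) (Fin n) ℂ) (p q : Fin m) :
    Λ X p q = ∑ i, ∑ j, X i j * choi Λ (p, i) (q, j) := by
  have single_eq_smul : ∀ i j, single i j (X i j) = X i j • single i j 1 := by simp
  conv_lhs => rw [matrix_eq_sum_single X]
  simp only [single_eq_smul, map_sum, map_smul, Matrix.sum_apply, Matrix.smul_apply, smul_eq_mul,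
    choi_apply]

theorem tensorId_apply (N : ℕ) (M : Matrix (Fin n × Fin N) (Fin n × Fin N) ℂ)
    (a b : Fin m × Fin N) :
    tensorId Λ N M a b = ∑ i, ∑ j, M (i, a.2) (j, b.2) * choi Λ (a.1, i) (b.1, j) :=
  apply_eq_sum_mul_choi Λ _ _ _

theorem tensorId_sum (N : ℕ) {ι : Type*} (s : Finset ι)
    (M : ι → Matrix (Fin n × Fin N) (Fin n × Fin N) ℂ) :
    tensorId Λ N (∑ r ∈ s, M r) = ∑ r ∈ s, tensorId Λ N (M r) := by
  ext a b
  have block_sum : (of fun i j => ∑ r ∈ s, M r (i, a.2) (j, b.2))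
      = ∑ r ∈ s, of fun i j => M r (i, a.2) (j, b.2) := by
    ext
    simp [Matrix.sum_apply]
  simp [tensorId, Matrix.sum_apply, block_sum]

def partialInner {ι κ τ : Type*} [Fintype τ] (w : ι × τ → ℂ) (x : κ × τ → ℂ) : ι × κ → ℂ :=
  fun a => ∑ t, w (a.1, t) * star (x (a.2, t))

theorem partialInner_delta_right {ι κ : Type*} [Fintype κ] [DecidableEq κ] (u : ι × κ → ℂ) :
    partialInner u (fun p : κ × κ => if p.1 = p.2 then 1 else 0) = u := by
  ext ⟨a, i⟩
  simp [partialInner]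

theorem partialInner_delta_left {ι κ : Type*} [Fintype ι] [DecidableEq ι] (u : ι × κ → ℂ) :
    partialInner (fun p : ι × ι => if p.1 = p.2 then 1 else 0)
      (fun p : κ × ι => star (u (p.2, p.1))) = u := by
  ext ⟨a, i⟩
  simp [partialInner]

theorem star_partialInner_dotProduct {ι κ τ : Type*} [Fintype ι] [Fintype κ] [Fintype τ]
    (w : ι × τ → ℂ) (x : κ × τ → ℂ) (v : ι × κ → ℂ) :
    star (partialInner w x) ⬝ᵥ v = star w ⬝ᵥ fun p => ∑ i, x (i, p.2) * v (p.1, i) := by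
  simp only [dotProduct, partialInner, Fintype.sum_prod_type, Pi.star_apply, star_sum, star_mul',
    star_star, Finset.mul_sum, Finset.sum_mul]
  refine Finset.sum_congr rfl fun a _ => ?_
  rw [Finset.sum_comm]
  exact Finset.sum_congr rfl fun _ _ => Finset.sum_congr rfl fun _ _ => by ring

theorem tensorId_vecMulVec_mulVec (N : ℕ) (x : Fin n × Fin N → ℂ) (w : Fin m × Fin N → ℂ) :
    tensorId Λ N (vecMulVec x (star x)) *ᵥ w
      = fun p => ∑ i, x (i, p.2) * (choi Λ *ᵥ partialInner w x) (p.1, i) := by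
  ext ⟨a, s⟩
  simp only [mulVec, dotProduct, tensorId_apply, partialInner, vecMulVec_apply,
    Fintype.sum_prod_type, Pi.star_apply, Finset.mul_sum, Finset.sum_mul]
  rw [Finset.sum_comm (s := (Finset.univ : Finset (Fin n)))]
  refine Finset.sum_congr rfl fun b _ => ?_
  rw [Finset.sum_comm (s := (Finset.univ : Finset (Fin N)))]
  refine Finset.sum_congr rfl fun i _ => ?_
  rw [Finset.sum_comm (s := (Finset.univ : Finset (Fin N)))]
  exact Finset.sum_congr rfl fun _ _ => Finset.sum_congr rfl fun _ _ => by ring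

theorem dotProduct_tensorId_vecMulVec_mulVec (N : ℕ) (x : Fin n × Fin N → ℂ)
    (w : Fin m × Fin N → ℂ) :
    star w ⬝ᵥ tensorId Λ N (vecMulVec x (star x)) *ᵥ w
      = star (partialInner w x) ⬝ᵥ choi Λ *ᵥ partialInner w x := by
  rw [tensorId_vecMulVec_mulVec, star_partialInner_dotProduct]

variable {Λ}

theorem NPos.dotProduct_choi_partialInner_nonneg {N : ℕ} (h : NPos Λ N)
    (w : Fin m × Fin N → ℂ) (x : Fin n × Fin N → ℂ) :
    0 ≤ star (partialInner w x) ⬝ᵥ choi Λ *ᵥ partialInner w x := by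
  rw [← dotProduct_tensorId_vecMulVec_mulVec]
  exact (h _ (posSemidef_vecMulVec_self_star x)).dotProduct_mulVec_nonneg w

theorem NPos.posSemidef_choi_of_min (h : NPos Λ (min n m)) : (choi Λ).PosSemidef := by
  refine posSemidef_of_forall_dotProduct_mulVec_nonneg fun u => ?_
  rcases min_choice n m with hmin | hmin <;> rw [hmin] at h
  · rw [← partialInner_delta_right u]
    exact h.dotProduct_choi_partialInner_nonneg _ _
  · rw [← partialInner_delta_left u]
    exact h.dotProduct_choi_partialInner_nonneg _ _

theorem nPos_of_posSemidef_choi (hC : (choi Λ).PosSemidef) (N : ℕ) : NPos Λ N := by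
  intro M hM
  obtain ⟨r, x, rfl⟩ := posSemidef_iff_eq_sum_vecMulVec.mp hM
  rw [tensorId_sum]
  refine posSemidef_sum _ fun i _ => posSemidef_of_forall_dotProduct_mulVec_nonneg fun w => ?_
  rw [dotProduct_tensorId_vecMulVec_mulVec]
  exact hC.dotProduct_mulVec_nonneg _

end

/-- if `Λ` is `min n m`-positive then it is completely positive. -/
theorem cp_of_min_pos {n m : ℕ}
    (Λ : Matrix (Fin n) (Fin n) ℂ →ₗ[ℂ] Matrix (Fin m) (Fin m) ℂ)
    (h : NPos Λ (min n m)) : CP Λ :=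
  fun N _ => nPos_of_posSemidef_choi h.posSemidef_choi_of_min N
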